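/- arXiv:1403.0875 — 4 statements merged into one kernel-verified Lean document; each statement's English description precedes it below -/
import Mathlib

section
/- For a fixed pole ⊥ and closed arithmetical expressions e₁, e₂: if M ⊨ e₁ = e₂ then ‖e₁ = e₂‖ = ‖∀X (X ⇒ X)‖, and if M ⊨ e₁ ≠ e₂ then ‖e₁ = e₂‖ = ‖⊤ ⇒ ⊥‖ = Λ × Π. -/
/-- First-order arithmetical expressions (variables, zero, successor, and
symbols for arbitrary (primitive recursive) functions). -/
inductive Expr : Type
  | evar : ℕ → Expr
  | zero : Expr
  | succ : Expr → Expr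
  | fn : (ℕ → ℕ) → Expr → Expr
  | op : (ℕ → ℕ → ℕ) → Expr → Expr → Expr

/-- Standard interpretation of a first-order expression in ℕ, under a
first-order valuation `ρ`. -/
def Expr.eval (ρ : ℕ → ℕ) : Expr → ℕ
  | .evar n => ρ n
  | .zero => 0
  | .succ e => e.eval ρ + 1
  | .fn g e => g (e.eval ρ)
  | .op g e₁ e₂ => g (e₁.eval ρ) (e₂.eval ρ)

/-- Formulas of second-order arithmetic with parameters, over a type `St` of
stacks: (unary) second-order variables applied to an expression, (unary)
predicate parameters (falsity-value functions), implication, first-order and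
second-order universal quantification.  Variable binding is handled via named
variables and valuations. -/
inductive Fml (St : Type*) : Type _
  | svar : ℕ → Expr → Fml St
  | sparam : (ℕ → Set St) → Expr → Fml St
  | imp : Fml St → Fml St → Fml St
  | fall1 : ℕ → Fml St → Fml St
  | fall2 : ℕ → Fml St → Fml St

/-- Truth value `S^⊥` of a falsity value `S` w.r.t. a pole `B`. -/
def orth {Λ St : Type*} (B : Set (Λ × St)) (S : Set St) : Set Λ :=
  {t | ∀ π ∈ S, (t, π) ∈ B}

/-- Falsity value `‖A‖` of a formula, w.r.t. a pole `B`, a push operation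
`cons` on stacks, a first-order valuation `ρ₁` and a second-order valuation
`ρ₂` (mapping second-order variables to falsity-value functions). -/
def fv {Λ St : Type*} (cons : Λ → St → St) (B : Set (Λ × St)) :
    (ℕ → ℕ) → (ℕ → ℕ → Set St) → Fml St → Set St
  | ρ₁, ρ₂, .svar X e => ρ₂ X (e.eval ρ₁)
  | ρ₁, _, .sparam F e => F (e.eval ρ₁)
  | ρ₁, ρ₂, .imp A A' =>
      {σ | ∃ t π, t ∈ orth B (fv cons B ρ₁ ρ₂ A) ∧ π ∈ fv cons B ρ₁ ρ₂ A' ∧ σ = cons t π}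
  | ρ₁, ρ₂, .fall1 x A => ⋃ n : ℕ, fv cons B (Function.update ρ₁ x n) ρ₂ A
  | ρ₁, ρ₂, .fall2 X A => ⋃ F : ℕ → Set St, fv cons B ρ₁ (Function.update ρ₂ X F) A

/-- Leibniz equality `e₁ = e₂ ≡ ∀W (W(e₁) ⇒ W(e₂))`. -/
def eqFml {St : Type*} (e₁ e₂ : Expr) : Fml St :=
  .fall2 0 (.imp (.svar 0 e₁) (.svar 0 e₂))

/-- The identity type `∀X (X ⇒ X)` (with `X` of arity 0, encoded as a unary
variable applied to the constant 0). -/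
def idFml {St : Type*} : Fml St := .fall2 0 (.imp (.svar 0 .zero) (.svar 0 .zero))

/-- The formula `⊤ ⇒ ⊥`, where `‖⊤‖ = ∅` and `⊥ ≡ ∀Z Z`. -/
def topImpBotFml {St : Type*} : Fml St :=
  .imp (.sparam (fun _ => (∅ : Set St)) .zero) (.fall2 0 (.svar 0 .zero))

/-!
A second-order quantifier ranges over all falsity-value functions `F`, so
`‖e₁ = e₂‖ = ⋃_F (F⟦e₁⟧ → F⟦e₂⟧)` only looks at `F` at the two values. If they
coincide this is `⋃_S (S → S)`, which is also `‖∀X (X ⇒ X)‖`. If they differ, take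
`F⟦e₁⟧ = ∅` and `F⟦e₂⟧ = Π`: since `∅^⊥ = Λ`, every stack `t·π` is reached, and the same
computation gives `‖⊤ ⇒ ⊥‖`.
-/

section

open Set

variable {Λ St : Type*} (cons : Λ → St → St) (B : Set (Λ × St))

def arrow (S S' : Set St) : Set St :=
  {σ | ∃ t π, t ∈ orth B S ∧ π ∈ S' ∧ σ = cons t π}

theorem arrow_subset (S S' : Set St) : arrow cons B S S' ⊆ {σ | ∃ t π, σ = cons t π} := by
  rintro _ ⟨t, π, -, -, rfl⟩
  exact ⟨t, π, rfl⟩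

theorem arrow_empty_univ : arrow cons B ∅ univ = {σ | ∃ t π, σ = cons t π} := by
  refine (arrow_subset cons B _ _).antisymm ?_
  rintro _ ⟨t, π, rfl⟩
  exact ⟨t, π, fun _ h => absurd h (notMem_empty _), mem_univ π, rfl⟩

theorem iUnion_arrow_apply_self (a : ℕ) :
    ⋃ F : ℕ → Set St, arrow cons B (F a) (F a) = ⋃ S : Set St, arrow cons B S S :=
  (iUnion_subset fun F : ℕ → Set St => subset_iUnion (fun S => arrow cons B S S) (F a)).antisymm
    (iUnion_subset fun S => subset_iUnion (fun F : ℕ → Set St => arrow cons B (F a) (F a))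
      fun _ => S)

theorem iUnion_arrow_apply_of_ne {a b : ℕ} (h : a ≠ b) :
    ⋃ F : ℕ → Set St, arrow cons B (F a) (F b) = {σ | ∃ t π, σ = cons t π} := by
  refine (iUnion_subset fun F => arrow_subset cons B _ _).antisymm ?_
  rw [← arrow_empty_univ cons B]
  let F : ℕ → Set St := Function.update (fun _ => ∅) b univ
  have hFa : F a = ∅ := Function.update_of_ne h _ _
  have hFb : F b = univ := Function.update_self _ _ _
  simpa only [hFa, hFb] using subset_iUnion (fun F : ℕ → Set St => arrow cons B (F a) (F b)) F

variable (ρ₁ : ℕ → ℕ) (ρ₂ : ℕ → ℕ → Set St)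

theorem fv_imp (A A' : Fml St) :
    fv cons B ρ₁ ρ₂ (.imp A A') = arrow cons B (fv cons B ρ₁ ρ₂ A) (fv cons B ρ₁ ρ₂ A') :=
  rfl

theorem fv_fall2_svar (X : ℕ) (e : Expr) : fv cons B ρ₁ ρ₂ (.fall2 X (.svar X e)) = univ :=
  eq_univ_of_forall fun π => mem_iUnion.2 ⟨fun _ => univ, by simp [fv]⟩

theorem fv_fall2_imp_svar (X : ℕ) (e₁ e₂ : Expr) :
    fv cons B ρ₁ ρ₂ (.fall2 X (.imp (.svar X e₁) (.svar X e₂))) =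
      ⋃ F : ℕ → Set St, arrow cons B (F (e₁.eval ρ₁)) (F (e₂.eval ρ₁)) := by
  simp only [fv, Function.update_self]
  rfl

theorem fv_topImpBotFml : fv cons B ρ₁ ρ₂ topImpBotFml = {σ | ∃ t π, σ = cons t π} := by
  rw [topImpBotFml, fv_imp, fv_fall2_svar]
  exact arrow_empty_univ cons B

end

/-- Falsity value of Leibniz equality: if `⟦e₁⟧ = ⟦e₂⟧` then
`‖e₁ = e₂‖ = ‖∀X (X ⇒ X)‖`, and if `⟦e₁⟧ ≠ ⟦e₂⟧` then
`‖e₁ = e₂‖ = ‖⊤ ⇒ ⊥‖`, which is the set of all stacks of the form `t·π`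
(i.e. "`Λ × Π`"). -/
theorem eq_falsity_value {Λ St : Type*} (cons : Λ → St → St)
    (B : Set (Λ × St)) (ρ₁ : ℕ → ℕ) (ρ₂ : ℕ → ℕ → Set St) (e₁ e₂ : Expr) :
    (e₁.eval ρ₁ = e₂.eval ρ₁ →
      fv cons B ρ₁ ρ₂ (eqFml e₁ e₂) = fv cons B ρ₁ ρ₂ idFml) ∧
    (e₁.eval ρ₁ ≠ e₂.eval ρ₁ →
      fv cons B ρ₁ ρ₂ (eqFml e₁ e₂) = fv cons B ρ₁ ρ₂ topImpBotFml ∧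
      fv cons B ρ₁ ρ₂ (topImpBotFml) = {σ | ∃ t π, σ = cons t π}) := by
  refine ⟨fun h => ?_, fun h => ?_⟩
  · rw [eqFml, idFml, fv_fall2_imp_svar, fv_fall2_imp_svar, h, iUnion_arrow_apply_self,
      iUnion_arrow_apply_self]
  · rw [fv_topImpBotFml, eqFml, fv_fall2_imp_svar, iUnion_arrow_apply_of_ne cons B h]
    exact ⟨rfl, rfl⟩
end

section
/- A closed λc-term t universally realizes the identity type ∀X (X ⇒ X) if and only if t is identity-like, i.e., for all closed terms u and all stacks π, t ⋆ u·π ≻ u ⋆ π. -/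
/-- Falsity value of the identity type `∀X (X ⇒ X)`:
`⋃_{S ⊆ Π} {u·π : u ∈ S^⊥, π ∈ S}`. -/
def idFalsity {Λ St : Type*} (cons : Λ → St → St) (B : Set (Λ × St)) : Set St :=
  {σ | ∃ S : Set St, ∃ u π, u ∈ orth B S ∧ π ∈ S ∧ σ = cons u π}

/-- A pole: a set of processes closed under anti-evaluation. -/
def IsPole {Λ St : Type*} (step1 : Λ × St → Λ × St → Prop)
    (B : Set (Λ × St)) : Prop :=
  ∀ p p', Relation.ReflTransGen step1 p p' → p' ∈ B → p ∈ B

section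

variable {Λ St : Type*}

theorem mem_orth_singleton {B : Set (Λ × St)} {u : Λ} {π : St} :
    u ∈ orth B {π} ↔ (u, π) ∈ B := by
  simp [orth]

theorem cons_mem_idFalsity (cons : Λ → St → St) {B : Set (Λ × St)} {S : Set St} {u : Λ}
    {π : St} (hu : u ∈ orth B S) (hπ : π ∈ S) : cons u π ∈ idFalsity cons B :=
  ⟨S, u, π, hu, hπ, rfl⟩

theorem isPole_setOf_reflTransGen (step1 : Λ × St → Λ × St → Prop) (q : Λ × St) :
    IsPole step1 {p | Relation.ReflTransGen step1 p q} :=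
  fun _ _ hpp' hp'q => hpp'.trans hp'q

theorem mem_orth_idFalsity_of_reduces {cons : Λ → St → St} {step1 : Λ × St → Λ × St → Prop}
    {B : Set (Λ × St)} (hB : IsPole step1 B) {t : Λ}
    (ht : ∀ u π, Relation.ReflTransGen step1 (t, cons u π) (u, π)) :
    t ∈ orth B (idFalsity cons B) := by
  rintro _ ⟨S, u, π, hu, hπ, rfl⟩
  exact hB _ _ (ht u π) (hu π hπ)

end

theorem univ_realizes_id_iff_identity_like_general {Λ St : Type*}
    (cons : Λ → St → St)
    (step1 : Λ × St → Λ × St → Prop) (t : Λ) :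
    (∀ B : Set (Λ × St), IsPole step1 B → t ∈ orth B (idFalsity cons B)) ↔
    (∀ (u : Λ) (π : St), Relation.ReflTransGen step1 (t, cons u π) (u, π)) := by
  refine ⟨fun h u π => ?_, fun h B hB => mem_orth_idFalsity_of_reduces hB h⟩
  have hu : u ∈ orth {p | Relation.ReflTransGen step1 p (u, π)} {π} :=
    mem_orth_singleton.2 Relation.ReflTransGen.refl
  exact h _ (isPole_setOf_reflTransGen step1 (u, π)) _
    (cons_mem_idFalsity cons hu (Set.mem_singleton π))

/-- A closed term `t` universally realizes the identity type `∀X (X ⇒ X)` if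
and only if `t` is identity-like, i.e. `t ⋆ u·π ≻ u ⋆ π` for all `u`, `π`. -/
theorem univ_realizes_id_iff_identity_like {Λ St : Type*}
    (cons : Λ → St → St)
    (hinj : ∀ t π t' π', cons t π = cons t' π' → t = t' ∧ π = π')
    (step1 : Λ × St → Λ × St → Prop) (t : Λ) :
    (∀ B : Set (Λ × St), IsPole step1 B → t ∈ orth B (idFalsity cons B)) ↔
    (∀ (u : Λ) (π : St), Relation.ReflTransGen step1 (t, cons u π) (u, π)) :=
  univ_realizes_id_iff_identity_like_general cons step1 t
end

section
/- Define the game G⁰ on a closed formula Φ ≡ ∃x₁∀y₁…∃x_h∀y_h (f(x₁,…,x_h,y₁,…,y_h)=0), with histories H of ∃-positions and winning sets W⁰ generated inductively by: (Win) H ∈ W⁰ if some (m⃗_h, n⃗_h) ∈ H satisfies f(m⃗_h,n⃗_h)=0; (Play) H ∈ W⁰ if there exist i < h, (m⃗_i, n⃗_i) ∈ H, and m ∈ ℕ such that for all n ∈ ℕ, H ∪ {(m⃗_i·m, n⃗_i·n)} ∈ W⁰. Then M ⊨ Φ if and only if {∅} ∈ W⁰_Φ. -/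
/-!
Eloise wins `G⁰` from a history exactly when some position of the history is true, i.e. the
formula with the choices recorded in that position substituted is true in ℕ.  From a true
position she plays the Skolem witness, so every answer of Abelard yields a true extended
position; conversely, along a winning derivation, a `play` move from a false position admits a
refuting answer `n`, so the truth of the history is inherited backwards from the `win` leaves.
-/

/-- Tarskian truth of the prenex formula
`∃x₁ ∀y₁ … ∃x_k ∀y_k (f(m⃗·x⃗, n⃗·y⃗) = 0)` in ℕ, with `k` remaining blocks of
quantifiers and accumulated choices `ms`, `ns`. -/
def GTruth (f : List ℕ → List ℕ → ℕ) : ℕ → List ℕ → List ℕ → Prop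
  | 0, ms, ns => f ms ns = 0
  | k + 1, ms, ns => ∃ m : ℕ, ∀ n : ℕ, GTruth f k (ms ++ [m]) (ns ++ [n])

/-- Winning histories of the backtracking game `G⁰` on the formula
`∃x₁ ∀y₁ … ∃x_h ∀y_h (f(x⃗,y⃗) = 0)`.  A history is a set of ∃-positions
`(m⃗_i, n⃗_i)`.  (Win): a complete position of `H` satisfies `f = 0`.
(Play): Eloise extends some position of `H` by an integer `m` and, whatever
Abelard answers `n`, the extended history is winning. -/
inductive W0 (h : ℕ) (f : List ℕ → List ℕ → ℕ) : Set (List ℕ × List ℕ) → Prop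
  | win (H : Set (List ℕ × List ℕ)) (ms ns : List ℕ) :
      (ms, ns) ∈ H → ms.length = h → ns.length = h → f ms ns = 0 → W0 h f H
  | play (H : Set (List ℕ × List ℕ)) (ms ns : List ℕ) (i m : ℕ) :
      i < h → ms.length = i → ns.length = i → (ms, ns) ∈ H →
      (∀ n : ℕ, W0 h f (H ∪ {(ms ++ [m], ns ++ [n])})) → W0 h f H

namespace W0

variable {h : ℕ} {f : List ℕ → List ℕ → ℕ} {H : Set (List ℕ × List ℕ)}

theorem of_gtruth {k : ℕ} {ms ns : List ℕ} (hmem : (ms, ns) ∈ H) (hlen : ms.length + k = h)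
    (hns : ns.length = ms.length) (htrue : GTruth f k ms ns) : W0 h f H := by
  induction k generalizing ms ns H with
  | zero => exact win H ms ns hmem hlen (by omega) htrue
  | succ k ih =>
    obtain ⟨m, hm⟩ := htrue
    refine play H ms ns ms.length m (by omega) rfl hns hmem fun n => ?_
    exact ih (Or.inr rfl) (by simp only [List.length_append, List.length_singleton]; omega)
      (by simp [hns]) (hm n)

theorem exists_gtruth (hw : W0 h f H) :
    ∃ p ∈ H, ∃ k, p.1.length + k = h ∧ GTruth f k p.1 p.2 := by
  induction hw with
  | win H ms ns hmem hms _ hzero => exact ⟨(ms, ns), hmem, 0, hms, hzero⟩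
  | play H ms ns i m hi hms _ hmem _ ih =>
    by_cases hext : ∀ n, GTruth f (h - (i + 1)) (ms ++ [m]) (ns ++ [n])
    · exact ⟨(ms, ns), hmem, h - (i + 1) + 1, by dsimp only; omega, m, hext⟩
    · push Not at hext
      obtain ⟨n, hn⟩ := hext
      obtain ⟨p, hp | rfl, k, hk, htrue⟩ := ih n
      · exact ⟨p, hp, k, hk, htrue⟩
      · have hk' : k = h - (i + 1) := by
          simp only [List.length_append, List.length_singleton] at hk
          omega
        exact absurd (hk' ▸ htrue) hn

end W0

/-- A closed formula `Φ ≡ ∃x₁ ∀y₁ … ∃x_h ∀y_h (f(x⃗,y⃗)=0)` is true in the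
standard model ℕ if and only if the initial history (containing only the
empty position) is winning for Eloise in the game `G⁰_Φ`. -/
theorem gtruth_iff_W0 (h : ℕ) (f : List ℕ → List ℕ → ℕ) :
    GTruth f h [] [] ↔ W0 h f {([], [])} := by
  refine ⟨fun htrue => W0.of_gtruth rfl (zero_add h) rfl htrue, fun hw => ?_⟩
  obtain ⟨p, rfl, k, hk, htrue⟩ := hw.exists_gtruth
  rw [List.length_nil, zero_add] at hk
  exact hk ▸ htrue
end

section
/- If Eloise has a winning strategy in the backtracking game G⁰_Φ (i.e., {∅} ∈ W⁰_Φ), then she has a winning strategy in the game without backtrack, i.e., the alternating quantifier statement ∃m₁∀n₁…∃m_h∀n_h (f(m⃗,n⃗)=0) holds in ℕ. -/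
theorem W0.exists_mem_gtruth {h : ℕ} {f : List ℕ → List ℕ → ℕ} {H : Set (List ℕ × List ℕ)}
    (hw : W0 h f H) : ∃ p ∈ H, GTruth f (h - p.1.length) p.1 p.2 := by
  induction hw with
  | win H ms ns hmem hml _ hf =>
    exact ⟨(ms, ns), hmem, by simpa [hml, GTruth] using hf⟩
  | play H ms ns i m hi hml _ hmem _ ih =>
    by_cases hold : ∃ p ∈ H, GTruth f (h - p.1.length) p.1 p.2
    · exact hold
    refine ⟨(ms, ns), hmem, ?_⟩
    have hnew : ∀ n, GTruth f (h - (i + 1)) (ms ++ [m]) (ns ++ [n]) := fun n => by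
      obtain ⟨p, hp | rfl, hpt⟩ := ih n
      · exact absurd ⟨p, hp, hpt⟩ hold
      · simpa [hml] using hpt
    rw [hml, show h - i = h - (i + 1) + 1 by omega]
    exact ⟨m, hnew⟩

/-- If Eloise has a winning strategy in the backtracking game `G⁰_Φ`, then
the alternating quantifier statement `∃m₁ ∀n₁ … ∃m_h ∀n_h (f(m⃗,n⃗)=0)` holds
in ℕ. -/
theorem W0_implies_gtruth (h : ℕ) (f : List ℕ → List ℕ → ℕ)
    (hw : W0 h f {([], [])}) : GTruth f h [] [] := by
  obtain ⟨p, rfl, hp⟩ := hw.exists_mem_gtruth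
  simpa using hp
end
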